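/- arXiv:2211.14284 — 2 statements merged into one kernel-verified Lean document; each statement's English description precedes it below -/
import Mathlib

section
/- Let {V_i}_{i=1}^N be subspaces of a finite-dimensional Hilbert space V (with inner product a) with V = Σ_i V_i, and let P_i : V → V_i be the a-orthogonal projection onto V_i. Suppose every v ∈ V admits a decomposition v = Σ_i v_i with v_i ∈ V_i and Σ_i a(v_i, v_i) ≤ c₁ a(v, v). Then the additive Schwarz operator T = Σ_i P_i satisfies a(Tv, v) ≥ c₁⁻¹ a(v,v) for all v ∈ V; i.e., the smallest eigenvalue of T is at least 1/c₁. -/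
/-!
Write `v = ∑ vᵢ` as a stable decomposition. Since `Pᵢ` is the `a`-orthogonal projection onto
`Vᵢ ∋ vᵢ`, `a(v, v) = ∑ a(Pᵢ v, vᵢ)`, and weighted AM-GM `2 a(x, y) ≤ c a(x, x) + c⁻¹ a(y, y)`
with `c = c₁` bounds `2 a(v, v)` by `c₁ ∑ a(Pᵢ v, Pᵢ v) + c₁⁻¹ ∑ a(vᵢ, vᵢ) ≤ c₁ a(Tv, v) + a(v, v)`.
-/

open Finset

section SymmetricForm

variable {V : Type*} [AddCommGroup V] [Module ℝ V] (a : V →ₗ[ℝ] V →ₗ[ℝ] ℝ)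

lemma two_mul_apply_le_mul_add_inv_mul (hsym : ∀ u v, a u v = a v u)
    (hnn : ∀ v, 0 ≤ a v v) {t : ℝ} (ht : 0 < t) (x y : V) :
    2 * a x y ≤ t * a x x + t⁻¹ * a y y := by
  have hsq : 0 ≤ t ^ 2 * a x x - 2 * t * a x y + a y y := by
    have := hnn (t • x - y)
    simp only [map_sub, map_smul, LinearMap.sub_apply, LinearMap.smul_apply, smul_eq_mul,
      hsym y x] at this
    linarith
  have hmul : t * (2 * a x y) ≤ t * (t * a x x + t⁻¹ * a y y) := by
    rw [mul_add, mul_inv_cancel_left₀ ht.ne']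
    linarith
  exact le_of_mul_le_mul_left hmul ht

variable {ι : Type*} [Fintype ι] {W : ι → Submodule ℝ V} {P : ι → V →ₗ[ℝ] V}

lemma apply_sum_proj_self_eq (hsym : ∀ u v, a u v = a v u) (hPmem : ∀ i v, P i v ∈ W i)
    (hPproj : ∀ i v, ∀ w ∈ W i, a (P i v) w = a v w) (v : V) :
    a (∑ i, P i v) v = ∑ i, a (P i v) (P i v) := by
  rw [map_sum, LinearMap.sum_apply]
  refine sum_congr rfl fun i _ => ?_
  rw [hsym, hPproj i v _ (hPmem i v)]

lemma apply_self_eq_sum_apply_proj (hPproj : ∀ i v, ∀ w ∈ W i, a (P i v) w = a v w)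
    {vi : ι → V} (hmem : ∀ i, vi i ∈ W i) :
    a (∑ i, vi i) (∑ i, vi i) = ∑ i, a (P i (∑ j, vi j)) (vi i) := by
  rw [map_sum]
  exact sum_congr rfl fun i _ => (hPproj i _ _ (hmem i)).symm

end SymmetricForm

theorem stmt_15_general {V : Type*} [AddCommGroup V] [Module ℝ V]
    (a : V →ₗ[ℝ] V →ₗ[ℝ] ℝ)
    (hsym : ∀ u v, a u v = a v u)
    (hpos : ∀ v, v ≠ 0 → 0 < a v v)
    (N : ℕ) (Vi : Fin N → Submodule ℝ V)
    (P : Fin N → V →ₗ[ℝ] V)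
    (hPmem : ∀ i v, P i v ∈ Vi i)
    (hPproj : ∀ i v, ∀ w ∈ Vi i, a (P i v) w = a v w)
    (c₁ : ℝ) (hc₁ : 0 < c₁)
    (hstable : ∀ v : V, ∃ vi : Fin N → V,
      (∀ i, vi i ∈ Vi i) ∧ v = ∑ i, vi i ∧
      ∑ i, a (vi i) (vi i) ≤ c₁ * a v v) :
    ∀ v : V, c₁⁻¹ * a v v ≤ a (∑ i, P i v) v := by
  have hnn : ∀ v, 0 ≤ a v v := fun v => by
    rcases eq_or_ne v 0 with rfl | hv
    · simp
    · exact (hpos v hv).le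
  intro v
  obtain ⟨vi, hmem, rfl, hstab⟩ := hstable v
  set v := ∑ i, vi i
  have key : 2 * a v v ≤ c₁ * a (∑ i, P i v) v + a v v :=
    calc 2 * a v v = ∑ i, 2 * a (P i v) (vi i) := by
          rw [apply_self_eq_sum_apply_proj a hPproj hmem, mul_sum]
      _ ≤ ∑ i, (c₁ * a (P i v) (P i v) + c₁⁻¹ * a (vi i) (vi i)) :=
          sum_le_sum fun i _ => two_mul_apply_le_mul_add_inv_mul a hsym hnn hc₁ _ _
      _ = c₁ * a (∑ i, P i v) v + c₁⁻¹ * ∑ i, a (vi i) (vi i) := by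
          rw [sum_add_distrib, ← mul_sum, ← mul_sum, apply_sum_proj_self_eq a hsym hPmem hPproj]
      _ ≤ c₁ * a (∑ i, P i v) v + a v v := by
          grw [hstab, inv_mul_cancel_left₀ hc₁.ne']
  rw [inv_mul_le_iff₀ hc₁]
  linarith

/-- Lions' lemma: the stable decomposition bound implies a lower bound on the additive
Schwarz operator `T = Σ_i P_i`. -/
theorem stmt_15 {V : Type*} [AddCommGroup V] [Module ℝ V] [FiniteDimensional ℝ V]
    (a : V →ₗ[ℝ] V →ₗ[ℝ] ℝ)
    (hsym : ∀ u v, a u v = a v u)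
    (hpos : ∀ v, v ≠ 0 → 0 < a v v)
    (N : ℕ) (Vi : Fin N → Submodule ℝ V)
    (hspan : (⨆ i, Vi i) = ⊤)
    (P : Fin N → V →ₗ[ℝ] V)
    (hPmem : ∀ i v, P i v ∈ Vi i)
    (hPproj : ∀ i v, ∀ w ∈ Vi i, a (P i v) w = a v w)
    (c₁ : ℝ) (hc₁ : 0 < c₁)
    (hstable : ∀ v : V, ∃ vi : Fin N → V,
      (∀ i, vi i ∈ Vi i) ∧ v = ∑ i, vi i ∧
      ∑ i, a (vi i) (vi i) ≤ c₁ * a v v) :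
    ∀ v : V, c₁⁻¹ * a v v ≤ a (∑ i, P i v) v :=
  stmt_15_general a hsym hpos N Vi P hPmem hPproj c₁ hc₁ hstable
end

section
/- Let {V_i}_{i=1}^N be subspaces of a finite-dimensional Hilbert space (V, a) and P_i the a-orthogonal projections. Suppose each subspace overlaps with at most N_O subspaces, i.e., for each i, the set {j : ∃ v_i ∈ V_i, v_j ∈ V_j with a(v_i, v_j) ≠ 0} has at most N_O elements. Then the additive Schwarz operator T = Σ_i P_i satisfies a(Tv, v) ≤ N_O a(v, v) for all v ∈ V. -/
/-!
Write `u i = P i v`. Since `P i` is an `a`-orthogonal projection, `a (u i) v = a (u i) (u i)`,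
so `S := a (∑ i, u i) v = ∑ i, a (u i) (u i)`. Only pairs `(i, j)` of overlapping subspaces
contribute to `a (∑ i, u i) (∑ i, u i)`, and bounding each such term by
`(a (u i) (u i) + a (u j) (u j)) / 2` gives `a (∑ i, u i) (∑ i, u i) ≤ N_O * S`.
Cauchy–Schwarz then yields `S ^ 2 ≤ N_O * S * a v v`.
-/

open Finset

theorem Finset.sum_sum_filter_add_le_of_symm {ι : Type*} [Fintype ι] {R : ι → ι → Prop}
    [DecidableRel R] (hR : ∀ i j, R i j → R j i) {n : ℕ} (hcard : ∀ i, #{j | R i j} ≤ n)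
    {f : ι → ℝ} (hf : ∀ i, 0 ≤ f i) :
    ∑ i, ∑ j with R i j, (f i + f j) ≤ 2 * n * ∑ i, f i := by
  have hswap : ∑ i, ∑ j with R i j, f j = ∑ i, ∑ j with R i j, f i :=
    sum_comm' fun i j => by simpa using ⟨hR i j, hR j i⟩
  calc ∑ i, ∑ j with R i j, (f i + f j)
      = 2 * ∑ i, (#{j | R i j} : ℝ) * f i := by
        simp only [sum_add_distrib, hswap, ← two_mul, sum_const, nsmul_eq_mul]
    _ ≤ 2 * ∑ i, (n : ℝ) * f i := by
        gcongr with i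
        · exact hf i
        · exact_mod_cast hcard i
    _ = 2 * n * ∑ i, f i := by rw [← mul_sum, mul_assoc]

namespace LinearMap.BilinForm

variable {V : Type*} [AddCommGroup V] [Module ℝ V] (a : LinearMap.BilinForm ℝ V)

theorem two_mul_apply_le_of_symm (hsym : ∀ u v, a u v = a v u) (hnn : ∀ v, 0 ≤ a v v)
    (x y : V) : 2 * a x y ≤ a x x + a y y := by
  have h := hnn (x - y)
  simp only [map_sub, LinearMap.sub_apply, hsym y x] at h
  linarith

theorem apply_sum_sum_le_of_sparse (hsym : ∀ u v, a u v = a v u) (hnn : ∀ v, 0 ≤ a v v)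
    {ι : Type*} [Fintype ι] (u : ι → V) {R : ι → ι → Prop} [DecidableRel R]
    (hR : ∀ i j, R i j → R j i)
    {n : ℕ} (hcard : ∀ i, #{j | R i j} ≤ n) (horth : ∀ i j, a (u i) (u j) ≠ 0 → R i j) :
    a (∑ i, u i) (∑ i, u i) ≤ n * ∑ i, a (u i) (u i) := by
  have hrow : ∀ i, ∑ j, 2 * a (u i) (u j) = ∑ j with R i j, 2 * a (u i) (u j) := fun i =>
    (sum_filter_of_ne fun j _ h => horth i j (right_ne_zero_of_mul h)).symm
  have h2 : 2 * a (∑ i, u i) (∑ i, u i) ≤ 2 * (n * ∑ i, a (u i) (u i)) :=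
    calc 2 * a (∑ i, u i) (∑ i, u i)
        = ∑ i, ∑ j with R i j, 2 * a (u i) (u j) := by
          simp only [map_sum, LinearMap.sum_apply, mul_sum]
          exact sum_comm.trans (sum_congr rfl fun i _ => hrow i)
      _ ≤ ∑ i, ∑ j with R i j, (a (u i) (u i) + a (u j) (u j)) := by
          gcongr with i _ j
          exact two_mul_apply_le_of_symm a hsym hnn _ _
      _ ≤ 2 * (n * ∑ i, a (u i) (u i)) := by
          rw [← mul_assoc]
          exact sum_sum_filter_add_le_of_symm hR hcard fun i => hnn _
  linarith

theorem apply_le_mul_apply_self_of_apply_self_le (hsym : ∀ u v, a u v = a v u)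
    (hnn : ∀ v, 0 ≤ a v v) {x y : V} {c : ℝ} (hc : 0 ≤ c) (h : a x x ≤ c * a x y) :
    a x y ≤ c * a y y := by
  have hcs := a.apply_mul_apply_le_of_forall_zero_le hnn x y
  rw [hsym y x] at hcs
  rcases le_or_gt (a x y) 0 with hxy | hxy
  · exact hxy.trans (mul_nonneg hc (hnn y))
  · nlinarith [mul_le_mul_of_nonneg_right h (hnn y)]

end LinearMap.BilinForm

theorem stmt_16_general {V : Type*} [AddCommGroup V] [Module ℝ V]
    (a : V →ₗ[ℝ] V →ₗ[ℝ] ℝ)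
    (hsym : ∀ u v, a u v = a v u)
    (hpos : ∀ v, v ≠ 0 → 0 < a v v)
    (N : ℕ) (Vi : Fin N → Submodule ℝ V)
    (P : Fin N → V →ₗ[ℝ] V)
    (hPmem : ∀ i v, P i v ∈ Vi i)
    (hPproj : ∀ i v, ∀ w ∈ Vi i, a (P i v) w = a v w)
    (NO : ℕ)
    (hoverlap : ∀ i,
      ({j | ∃ vi ∈ Vi i, ∃ vj ∈ Vi j, a vi vj ≠ 0} : Set (Fin N)).ncard ≤ NO) :
    ∀ v : V, a (∑ i, P i v) v ≤ (NO : ℝ) * a v v := by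
  classical
  intro v
  have hnn : ∀ w, 0 ≤ a w w := fun w => by
    rcases eq_or_ne w 0 with rfl | hw
    · simp
    · exact (hpos w hw).le
  have hS : a (∑ i, P i v) v = ∑ i, a (P i v) (P i v) := by
    simp only [map_sum, LinearMap.sum_apply, hPproj _ v _ (hPmem _ v)]
    exact sum_congr rfl fun i _ => hsym _ _
  let R i j := ∃ vi ∈ Vi i, ∃ vj ∈ Vi j, a vi vj ≠ 0
  have hR : ∀ i j, R i j → R j i := fun i j ⟨vi, hvi, vj, hvj, h⟩ =>
    ⟨vj, hvj, vi, hvi, hsym vi vj ▸ h⟩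
  have hcard : ∀ i, #{j | R i j} ≤ NO := fun i => by
    simpa [Set.ncard_eq_toFinset_card'] using hoverlap i
  have hTT := LinearMap.BilinForm.apply_sum_sum_le_of_sparse a hsym hnn (fun i => P i v) hR hcard
    fun i j hne => ⟨_, hPmem i v, _, hPmem j v, hne⟩
  rw [← hS] at hTT
  exact LinearMap.BilinForm.apply_le_mul_apply_self_of_apply_self_le a hsym hnn NO.cast_nonneg hTT

/-- Upper eigenvalue bound for the additive Schwarz operator by the overlap count. -/
theorem stmt_16 {V : Type*} [AddCommGroup V] [Module ℝ V] [FiniteDimensional ℝ V]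
    (a : V →ₗ[ℝ] V →ₗ[ℝ] ℝ)
    (hsym : ∀ u v, a u v = a v u)
    (hpos : ∀ v, v ≠ 0 → 0 < a v v)
    (N : ℕ) (Vi : Fin N → Submodule ℝ V)
    (P : Fin N → V →ₗ[ℝ] V)
    (hPmem : ∀ i v, P i v ∈ Vi i)
    (hPproj : ∀ i v, ∀ w ∈ Vi i, a (P i v) w = a v w)
    (NO : ℕ)
    (hoverlap : ∀ i,
      ({j | ∃ vi ∈ Vi i, ∃ vj ∈ Vi j, a vi vj ≠ 0} : Set (Fin N)).ncard ≤ NO) :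
    ∀ v : V, a (∑ i, P i v) v ≤ (NO : ℝ) * a v v :=
  stmt_16_general a hsym hpos N Vi P hPmem hPproj NO hoverlap
end
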